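/- Let j ∈ ℤ and let (c_k)_{k≥1} be a sequence of complex numbers, and define a_m = ∑_{k=1}^{m} F^{|j|}_{m,k} c_k for m ≥ 1, where F^{|j|}_{m,k} = a^{|j|,k-1}_{m,m+|j|}. Then the forward substitution recursion c_{k+1} = -√(π(|j|+2k+1)) · binom(|j|+2k, k) · a_{k+1} - ∑_{i=1}^{k} c_i · √((|j|+2k+1)(|j|+2i-1))/(|j|+k+i) · binom(|j|+2k, k-i+1) recovers (c_k): i.e., for all k ≥ 0 the right-hand side evaluated at the data (a_m) equals c_{k+1}. -/

import Mathlib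

open Real

/-- The explicit matrix elements `a^{j,k}_{m,n}` of the linearized EIT forward map
in the Zernike/Fourier bases. -/
noncomputable def acoef (j : ℤ) (k : ℕ) (m n : ℤ) : ℝ :=
  if n = m + j ∧ (k : ℤ) < min |m| |n| ∧ m * n > 0 then
    -(1 / Real.sqrt π) * Real.sqrt ((j.natAbs : ℝ) + 2 * k + 1) /
        (((min |m| |n| : ℤ) : ℝ) + (j.natAbs : ℝ) + k) *
      ∏ i ∈ Finset.Icc 1 k,
        (((min |m| |n| : ℤ) : ℝ) - i) / ((j.natAbs : ℝ) + ((min |m| |n| : ℤ) : ℝ) + k - i)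
  else 0

/-- The entries of the infinite lower triangular matrix `F^{|j|}`:
`F^{|j|}_{m,k} = a^{|j|,k-1}_{m,m+|j|}` for `1 ≤ k ≤ m`, zero otherwise. -/
noncomputable def Fmat (j : ℤ) (m k : ℕ) : ℝ :=
  if 1 ≤ k ∧ k ≤ m then acoef |j| (k - 1) (m : ℤ) ((m : ℤ) + |j|) else 0

/-!
Writing `J = |j|`, the entry `F^J_{k+1,p+1}` equals
`-(1/√π) · √(J+2p+1)/(J+k+p+1) · k^{(p)} / (J+k+p)^{(p)}` with falling factorials `n^{(p)}`.
The identity `C(n,k) · k^{(p)} = C(n,k-p) · (n-k+p)^{(p)}` shows that row `k+1` of `F^J`, scaled by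
`√(π(J+2k+1)) · C(J+2k,k)`, has entries `-√((J+2k+1)(J+2p+1))/(J+k+p+1) · C(J+2k,k-p)`, and the
diagonal one is `-1`. Solving that row of `a = F^J c` for `c_{k+1}` is the recursion.
-/

open Finset

theorem prod_Icc_natCast_add_one_sub {R : Type*} [CommRing R] (n p : ℕ) :
    ∏ i ∈ Icc 1 p, ((n : R) + 1 - i) = n.descFactorial p := by
  induction p with
  | zero => simp
  | succ p ih =>
    rw [prod_Icc_succ_top (by omega), ih, Nat.descFactorial_succ]
    rcases le_or_gt p n with hpn | hnp
    · push_cast [hpn]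
      ring
    · simp [Nat.descFactorial_eq_zero_iff_lt.mpr hnp]

theorem Nat.choose_mul_descFactorial {n k p : ℕ} (hp : p ≤ k) :
    n.choose k * k.descFactorial p = n.choose (k - p) * (n - (k - p)).descFactorial p := by
  have h := Nat.choose_mul (n := n) (Nat.sub_le k p)
  rw [Nat.choose_symm hp, Nat.sub_sub_self hp] at h
  rw [Nat.descFactorial_eq_factorial_mul_choose, Nat.descFactorial_eq_factorial_mul_choose]
  grind

theorem acoef_natCast_succ (J k p : ℕ) (hp : p ≤ k) :
    acoef J p (k + 1 : ℕ) ((k + 1 : ℕ) + J) =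
      -(1 / √π) * √((J : ℝ) + 2 * p + 1) / ((J : ℝ) + k + p + 1) *
        ((k.descFactorial p : ℝ) / (J + k + p).descFactorial p) := by
  have hmin : min |((k + 1 : ℕ) : ℤ)| |((k + 1 : ℕ) : ℤ) + J| = ((k + 1 : ℕ) : ℤ) := by
    rw [← Nat.cast_add, Nat.abs_cast, Nat.abs_cast]
    omega
  rw [acoef, if_pos ⟨rfl, by omega, by positivity⟩, hmin, prod_div_distrib, Int.natAbs_natCast]
  have hnum := prod_Icc_natCast_add_one_sub (R := ℝ) k p
  have hden := prod_Icc_natCast_add_one_sub (R := ℝ) (J + k + p) p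
  push_cast at hnum hden ⊢
  rw [← hnum, ← hden]
  congr 1
  · ring
  · congr 1
    exact prod_congr rfl fun i _ => by ring

theorem Fmat_succ_succ (j : ℤ) (k p : ℕ) (hp : p ≤ k) :
    Fmat j (k + 1) (p + 1) =
      -(1 / √π) * √((j.natAbs : ℝ) + 2 * p + 1) / ((j.natAbs : ℝ) + k + p + 1) *
        ((k.descFactorial p : ℝ) / (j.natAbs + k + p).descFactorial p) := by
  rw [Fmat, if_pos ⟨by omega, by omega⟩, ← Int.natCast_natAbs, Nat.add_sub_cancel]
  exact acoef_natCast_succ j.natAbs k p hp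

theorem sqrt_mul_choose_mul_Fmat_succ_succ (j : ℤ) (k p : ℕ) (hp : p ≤ k) :
    √(π * ((j.natAbs : ℝ) + 2 * k + 1)) * ((j.natAbs + 2 * k).choose k : ℝ) *
        Fmat j (k + 1) (p + 1) =
      -(√(((j.natAbs : ℝ) + 2 * k + 1) * ((j.natAbs : ℝ) + 2 * p + 1)) /
          ((j.natAbs : ℝ) + k + p + 1) * ((j.natAbs + 2 * k).choose (k - p) : ℝ)) := by
  have hchoose : ((j.natAbs + 2 * k).choose k : ℝ) * k.descFactorial p =
      (j.natAbs + 2 * k).choose (k - p) * (j.natAbs + k + p).descFactorial p := by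
    rw [show j.natAbs + k + p = j.natAbs + 2 * k - (k - p) by omega]
    exact_mod_cast Nat.choose_mul_descFactorial hp
  have hden : ((j.natAbs + k + p).descFactorial p : ℝ) ≠ 0 := by
    exact_mod_cast (Nat.descFactorial_pos.mpr (by omega)).ne'
  rw [Fmat_succ_succ j k p hp, sqrt_mul pi_nonneg, sqrt_mul (by positivity), ← mul_div_cancel_right₀
    ((j.natAbs + 2 * k).choose (k - p) : ℝ) hden, ← hchoose]
  field_simp

theorem sqrt_mul_choose_mul_Fmat_self (j : ℤ) (k : ℕ) :
    √(π * ((j.natAbs : ℝ) + 2 * k + 1)) * ((j.natAbs + 2 * k).choose k : ℝ) *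
        Fmat j (k + 1) (k + 1) = -1 := by
  rw [sqrt_mul_choose_mul_Fmat_succ_succ j k k le_rfl, sqrt_mul_self (by positivity),
    Nat.sub_self, Nat.choose_zero_right, Nat.cast_one, mul_one, neg_inj,
    div_eq_one_iff_eq (by positivity)]
  ring

theorem sqrt_mul_choose_mul_Fmat_of_lt (j : ℤ) (k i : ℕ) (hi : 1 ≤ i) (hik : i ≤ k) :
    √(π * ((j.natAbs : ℝ) + 2 * k + 1)) * ((j.natAbs + 2 * k).choose k : ℝ) *
        Fmat j (k + 1) i =
      -(√(((j.natAbs : ℝ) + 2 * k + 1) * ((j.natAbs : ℝ) + 2 * i - 1)) /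
          ((j.natAbs : ℝ) + k + i) * ((j.natAbs + 2 * k).choose (k - i + 1) : ℝ)) := by
  obtain ⟨p, rfl⟩ : ∃ p, i = p + 1 := ⟨i - 1, by omega⟩
  rw [sqrt_mul_choose_mul_Fmat_succ_succ j k p (by omega), show k - (p + 1) + 1 = k - p by omega]
  push_cast
  ring_nf

/-- Forward substitution: the explicit recursion recovers the Zernike coefficients from
the data `a_m = ∑_{k=1}^m F^{|j|}_{m,k} c_k`. -/
theorem forward_substitution_recovers (j : ℤ) (c a : ℕ → ℂ)
    (ha : ∀ m : ℕ, 1 ≤ m → a m = ∑ k ∈ Finset.Icc 1 m, (Fmat j m k : ℂ) * c k) :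
    ∀ k : ℕ,
      c (k + 1) =
        -((Real.sqrt (π * ((j.natAbs : ℝ) + 2 * k + 1)) : ℝ) : ℂ) *
            ((Nat.choose (j.natAbs + 2 * k) k : ℕ) : ℂ) * a (k + 1) -
          ∑ i ∈ Finset.Icc 1 k,
            c i *
              ((Real.sqrt (((j.natAbs : ℝ) + 2 * k + 1) * ((j.natAbs : ℝ) + 2 * i - 1)) /
                  ((j.natAbs : ℝ) + k + i) : ℝ) : ℂ) *
              ((Nat.choose (j.natAbs + 2 * k) (k - i + 1) : ℕ) : ℂ) := by
  intro k
  have hdiag := congrArg Complex.ofReal (sqrt_mul_choose_mul_Fmat_self j k)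
  have hoff : (√(π * ((j.natAbs : ℝ) + 2 * k + 1)) : ℂ) * ((j.natAbs + 2 * k).choose k : ℂ) *
      ∑ i ∈ Icc 1 k, (Fmat j (k + 1) i : ℂ) * c i =
        -∑ i ∈ Icc 1 k, c i * ((√(((j.natAbs : ℝ) + 2 * k + 1) * ((j.natAbs : ℝ) + 2 * i - 1)) /
          ((j.natAbs : ℝ) + k + i) : ℝ) : ℂ) * ((j.natAbs + 2 * k).choose (k - i + 1) : ℂ) := by
    rw [mul_sum, ← sum_neg_distrib]
    refine sum_congr rfl fun i hi => ?_
    rw [mem_Icc] at hi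
    have h := congrArg Complex.ofReal (sqrt_mul_choose_mul_Fmat_of_lt j k i hi.1 hi.2)
    push_cast at h ⊢
    linear_combination c i * h
  rw [ha (k + 1) (by omega), sum_Icc_succ_top (by omega)]
  push_cast at hdiag
  linear_combination hoff + c (k + 1) * hdiag
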